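/- arXiv:2407.18770 — 8 statements merged into one kernel-verified Lean document; each statement's English description precedes it below -/
import Mathlib

section
/- Let a, b, c, d be real numbers with 0 < a < b < c < d. Then there exists a unique real number p such that (a, b, c, d) is an analogy in power p, i.e., there exists a unique p ∈ ℝ such that either (p ≠ 0 and a^p + d^p = b^p + c^p) or (p = 0 and a·d = b·c). -/
open Real Set

noncomputable def Gf (u v w p : ℝ) : ℝ :=
  1 - Real.exp (u * p) - Real.exp (v * p) + Real.exp (w * p)

noncomputable def Psi (u v w p : ℝ) : ℝ :=
  -u - v * Real.exp ((v - u) * p) + w * Real.exp ((w - u) * p)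

lemma hasDerivAt_exp_mul (c p : ℝ) :
    HasDerivAt (fun x => Real.exp (c * x)) (c * Real.exp (c * p)) p := by
  exact ((hasDerivAt_id' p).const_mul c).exp.congr_deriv (by ring)

lemma hasDerivAt_Gf (u v w p : ℝ) :
    HasDerivAt (Gf u v w) (Real.exp (u * p) * Psi u v w p) p := by
  have h := (((hasDerivAt_const p (1:ℝ)).sub (hasDerivAt_exp_mul u p)).sub
    (hasDerivAt_exp_mul v p)).add (hasDerivAt_exp_mul w p)
  refine h.congr_deriv ?_
  simp only [Psi]
  rw [show v * p = u * p + (v - u) * p by ring, show w * p = u * p + (w - u) * p by ring,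
    Real.exp_add, Real.exp_add]
  ring

lemma hasDerivAt_Psi (u v w p : ℝ) :
    HasDerivAt (Psi u v w)
      (Real.exp ((v - u) * p) * (w * (w - u) * Real.exp ((w - v) * p) - v * (v - u))) p := by
  have h := (((hasDerivAt_const p (-u)).sub ((hasDerivAt_exp_mul (v - u) p).const_mul v)).add
    ((hasDerivAt_exp_mul (w - u) p).const_mul w))
  refine h.congr_deriv ?_
  rw [show (w - u) * p = (v - u) * p + (w - v) * p by ring, Real.exp_add]
  ring

lemma continuous_Psi (u v w : ℝ) : Continuous (Psi u v w) := by
  unfold Psi; fun_prop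

lemma continuous_Gf (u v w : ℝ) : Continuous (Gf u v w) := by
  unfold Gf; fun_prop

lemma psi_sign (u v w : ℝ) (h0u : 0 < u) (huv : u < v) (hvw : v < w) :
    ∃ z, Psi u v w z = 0 ∧ (∀ p, p < z → Psi u v w p < 0) ∧
      (∀ p, z < p → 0 < Psi u v w p) := by
  have h0v : 0 < v := h0u.trans huv
  have h0w : 0 < w := h0v.trans hvw
  have hvu : 0 < v - u := by linarith
  have hwv : 0 < w - v := by linarith
  have hwu : 0 < w - u := by linarith
  set z0 : ℝ := Real.log (v * (v - u) / (w * (w - u))) / (w - v) with hz0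
  have hratio : (0:ℝ) < v * (v - u) / (w * (w - u)) := by positivity
  have hz0exp : Real.exp ((w - v) * z0) = v * (v - u) / (w * (w - u)) := by
    rw [hz0, mul_div_assoc', mul_div_cancel_left₀ _ (ne_of_gt hwv), Real.exp_log hratio]
  -- key bound: for p ≤ z0, Psi p < -u < 0
  have hneg : ∀ p, p ≤ z0 → Psi u v w p < 0 := by
    intro p hp
    have h1 : Real.exp ((w - v) * p) ≤ v * (v - u) / (w * (w - u)) := by
      rw [← hz0exp]
      exact Real.exp_le_exp.2 (by nlinarith)
    have h2 : w * Real.exp ((w - v) * p) < v := by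
      have hx : w * (v * (v - u) / (w * (w - u))) = v * (v - u) / (w - u) := by
        field_simp
      have : w * (v * (v - u) / (w * (w - u))) < v := by
        rw [hx, div_lt_iff₀ hwu]; nlinarith
      nlinarith [Real.exp_pos ((w - v) * p)]
    have hsplit : Real.exp ((w - u) * p) = Real.exp ((v - u) * p) * Real.exp ((w - v) * p) := by
      rw [← Real.exp_add]; ring_nf
    have := Real.exp_pos ((v - u) * p)
    simp only [Psi, hsplit]
    nlinarith
  -- monotonicity of Psi on Ici z0
  have hmono : StrictMonoOn (Psi u v w) (Ici z0) := by
    apply strictMonoOn_of_deriv_pos (convex_Ici z0) (continuous_Psi u v w).continuousOn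
    intro p hp
    rw [interior_Ici] at hp
    rw [(hasDerivAt_Psi u v w p).deriv]
    have h1 : v * (v - u) / (w * (w - u)) < Real.exp ((w - v) * p) := by
      rw [← hz0exp]
      exact Real.exp_lt_exp.2 (by nlinarith [mem_Ioi.1 hp])
    have h2 : 0 < w * (w - u) * Real.exp ((w - v) * p) - v * (v - u) := by
      have : w * (w - u) * (v * (v - u) / (w * (w - u))) = v * (v - u) := by
        field_simp
      nlinarith [mul_lt_mul_of_pos_left h1 (show (0:ℝ) < w * (w - u) by positivity)]
    positivity
  -- a point where Psi is positive
  have hpos : ∃ Q, z0 ≤ Q ∧ 0 < Psi u v w Q := by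
    refine ⟨max (max (Real.log (2 * v / w) / (w - v)) (Real.log ((u + 1) / v) / (v - u))) z0,
      le_max_right _ _, ?_⟩
    set Q := max (max (Real.log (2 * v / w) / (w - v)) (Real.log ((u + 1) / v) / (v - u))) z0
    have hQ1 : Real.log (2 * v / w) / (w - v) ≤ Q := le_trans (le_max_left _ _) (le_max_left _ _)
    have hQ2 : Real.log ((u + 1) / v) / (v - u) ≤ Q := le_trans (le_max_right _ _) (le_max_left _ _)
    have e1 : 2 * v / w ≤ Real.exp ((w - v) * Q) := by
      rw [← Real.exp_log (show (0:ℝ) < 2 * v / w by positivity)]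
      apply Real.exp_le_exp.2
      rw [div_le_iff₀ hwv] at hQ1; nlinarith
    have e2 : (u + 1) / v ≤ Real.exp ((v - u) * Q) := by
      rw [← Real.exp_log (show (0:ℝ) < (u + 1) / v by positivity)]
      apply Real.exp_le_exp.2
      rw [div_le_iff₀ hvu] at hQ2; nlinarith
    have hsplit : Real.exp ((w - u) * Q) = Real.exp ((v - u) * Q) * Real.exp ((w - v) * Q) := by
      rw [← Real.exp_add]; ring_nf
    have hw1 : 2 * v ≤ w * Real.exp ((w - v) * Q) := by
      rw [div_le_iff₀ h0w] at e1; linarith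
    have hv1 : u + 1 ≤ v * Real.exp ((v - u) * Q) := by
      rw [div_le_iff₀ h0v] at e2; linarith
    simp only [Psi, hsplit]
    have hev := Real.exp_pos ((v - u) * Q)
    nlinarith
  obtain ⟨Q, hz0Q, hQpos⟩ := hpos
  have hivt := intermediate_value_Icc hz0Q (continuous_Psi u v w).continuousOn
  have h0mem : (0:ℝ) ∈ Icc (Psi u v w z0) (Psi u v w Q) :=
    ⟨le_of_lt (hneg z0 le_rfl), le_of_lt hQpos⟩
  obtain ⟨z, hzmem, hzeq⟩ := hivt h0mem
  have hz0z : z0 < z := by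
    rcases lt_or_ge z0 z with h | h
    · exact h
    · exact absurd hzeq (ne_of_lt (hneg z h))
  refine ⟨z, hzeq, ?_, ?_⟩
  · intro p hp
    rcases le_or_gt p z0 with h | h
    · exact hneg p h
    · have := hmono (le_of_lt h) (le_of_lt hz0z) hp
      rwa [hzeq] at this
  · intro p hp
    have := hmono (le_of_lt hz0z) (le_of_lt (hz0z.trans hp)) hp
    rwa [hzeq] at this

lemma gf_key (u v w : ℝ) (h0u : 0 < u) (huv : u < v) (hvw : v < w) :
    ∃ ρ : ℝ, (ρ = 0 ↔ w = u + v) ∧ Gf u v w ρ = 0 ∧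
      ∀ q, Gf u v w q = 0 → q = 0 ∨ q = ρ := by
  have h0v : 0 < v := h0u.trans huv
  have h0w : 0 < w := h0v.trans hvw
  have hwv : 0 < w - v := by linarith
  obtain ⟨z, hz0, hzneg, hzpos⟩ := psi_sign u v w h0u huv hvw
  have hG0 : Gf u v w 0 = 0 := by simp [Gf]
  have hA : StrictAntiOn (Gf u v w) (Iic z) := by
    apply strictAntiOn_of_deriv_neg (convex_Iic z) (continuous_Gf u v w).continuousOn
    intro p hp
    rw [interior_Iic] at hp
    rw [(hasDerivAt_Gf u v w p).deriv]
    exact mul_neg_of_pos_of_neg (Real.exp_pos _) (hzneg p hp)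
  have hM : StrictMonoOn (Gf u v w) (Ici z) := by
    apply strictMonoOn_of_deriv_pos (convex_Ici z) (continuous_Gf u v w).continuousOn
    intro p hp
    rw [interior_Ici] at hp
    rw [(hasDerivAt_Gf u v w p).deriv]
    exact mul_pos (Real.exp_pos _) (hzpos p hp)
  have hPsi0 : Psi u v w 0 = w - u - v := by simp [Psi]; ring
  rcases lt_trichotomy z 0 with hzlt | hzeq | hzgt
  · -- z < 0 : nonzero root ρ < z
    have hwuv : w ≠ u + v := by
      have := hzpos 0 hzlt
      rw [hPsi0] at this; intro h; rw [h] at this; linarith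
    have hGz : Gf u v w z < 0 := by
      have := hM (le_refl z) (le_of_lt hzlt) hzlt
      rwa [hG0] at this
    -- a far-left point where Gf is positive
    set Q : ℝ := min (z - 1) (-(Real.log 2) / u - 1) with hQdef
    have hQz : Q < z := lt_of_le_of_lt (min_le_left _ _) (by linarith)
    have hQneg : Q < 0 := by
      have h2 : (0:ℝ) < Real.log 2 := Real.log_pos (by norm_num)
      have : -(Real.log 2) / u - 1 < 0 := by
        have : -(Real.log 2) / u < 0 := div_neg_of_neg_of_pos (by linarith) h0u
        linarith
      exact lt_of_le_of_lt (min_le_right _ _) this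
    have hGQ : 0 < Gf u v w Q := by
      have hexpU : Real.exp (u * Q) < 1 / 2 := by
        have hQ2 : Q < -(Real.log 2) / u := lt_of_le_of_lt (min_le_right _ _) (by linarith)
        have : u * Q < -(Real.log 2) := by
          rw [lt_div_iff₀ h0u] at hQ2; linarith
        calc Real.exp (u * Q) < Real.exp (-(Real.log 2)) := Real.exp_lt_exp.2 this
          _ = 1 / 2 := by
            rw [Real.exp_neg, Real.exp_log (by norm_num : (0:ℝ) < 2)]; norm_num
      have hexpV : Real.exp (v * Q) ≤ Real.exp (u * Q) :=
        Real.exp_le_exp.2 (by nlinarith)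
      have := Real.exp_pos (w * Q)
      simp only [Gf]; nlinarith
    obtain ⟨ρ, hρmem, hρeq⟩ := intermediate_value_Icc' (le_of_lt hQz)
      (continuous_Gf u v w).continuousOn ⟨le_of_lt hGz, le_of_lt hGQ⟩
    have hρz : ρ < z := lt_of_le_of_ne hρmem.2 (fun h => by rw [h] at hρeq; linarith)
    refine ⟨ρ, ⟨fun h => absurd hρz (by rw [h]; linarith), fun h => absurd h hwuv⟩, hρeq, ?_⟩
    intro q hq
    rcases le_or_gt q z with h | h
    · right
      exact hA.injOn h (le_of_lt hρz) (by rw [hq, hρeq])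
    · left
      exact hM.injOn (le_of_lt h) (le_of_lt hzlt) (by rw [hq, hG0])
  · -- z = 0 : only root is 0
    refine ⟨0, ⟨fun _ => ?_, fun _ => rfl⟩, hG0, ?_⟩
    · have := hz0; rw [hzeq, hPsi0] at this; linarith
    · intro q hq
      left
      by_contra hq0
      rcases lt_or_gt_of_ne hq0 with h | h
      · have h1 : q ∈ Iic z := by rw [hzeq]; exact le_of_lt h
        have h2 : (0:ℝ) ∈ Iic z := by rw [hzeq]; exact self_mem_Iic
        have := hA h1 h2 h
        rw [hG0] at this; linarith
      · have h1 : (0:ℝ) ∈ Ici z := by rw [hzeq]; exact self_mem_Ici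
        have h2 : q ∈ Ici z := by rw [hzeq]; exact le_of_lt h
        have := hM h1 h2 h
        rw [hG0] at this; linarith
  · -- z > 0 : nonzero root ρ > z
    have hwuv : w ≠ u + v := by
      have := hzneg 0 hzgt
      rw [hPsi0] at this; intro h; rw [h] at this; linarith
    have hGz : Gf u v w z < 0 := by
      have := hA (le_of_lt hzgt) (le_refl z) hzgt
      rwa [hG0] at this
    set P : ℝ := max (z + 1) (Real.log 3 / (w - v)) with hPdef
    have hPz : z < P := lt_of_lt_of_le (by linarith) (le_max_left _ _)
    have hP0 : 0 < P := hzgt.trans hPz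
    have hGP : 0 < Gf u v w P := by
      have hexp3 : (3:ℝ) ≤ Real.exp ((w - v) * P) := by
        have h1 : Real.log 3 / (w - v) ≤ P := le_max_right _ _
        rw [div_le_iff₀ hwv] at h1
        calc (3:ℝ) = Real.exp (Real.log 3) := (Real.exp_log (by norm_num)).symm
          _ ≤ Real.exp ((w - v) * P) := Real.exp_le_exp.2 (by linarith)
      have hsplit : Real.exp (w * P) = Real.exp (v * P) * Real.exp ((w - v) * P) := by
        rw [← Real.exp_add]; ring_nf
      have hexpU : Real.exp (u * P) ≤ Real.exp (v * P) :=
        Real.exp_le_exp.2 (by nlinarith)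
      have := Real.exp_pos (v * P)
      simp only [Gf, hsplit]; nlinarith
    obtain ⟨ρ, hρmem, hρeq⟩ := intermediate_value_Icc (le_of_lt hPz)
      (continuous_Gf u v w).continuousOn ⟨le_of_lt hGz, le_of_lt hGP⟩
    have hρz : z < ρ := lt_of_le_of_ne hρmem.1 (fun h => by rw [← h] at hρeq; linarith)
    refine ⟨ρ, ⟨fun h => absurd hρz (by rw [h]; linarith), fun h => absurd h hwuv⟩, hρeq, ?_⟩
    intro q hq
    rcases le_or_gt q z with h | h
    · left
      exact hA.injOn h (le_of_lt hzgt) (by rw [hq, hG0])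
    · right
      exact hM.injOn (le_of_lt h) (le_of_lt hρz) (by rw [hq, hρeq])

theorem exists_unique_analogy_pow_aux (a b c d : ℝ)
    (ha : 0 < a) (hab : a < b) (hbc : b < c) (hcd : c < d) :
    ∃! p : ℝ, (p ≠ 0 ∧ a ^ p + d ^ p = b ^ p + c ^ p) ∨ (p = 0 ∧ a * d = b * c) := by
  have hb : 0 < b := ha.trans hab
  have hc : 0 < c := hb.trans hbc
  have hd : 0 < d := hc.trans hcd
  set u : ℝ := Real.log b - Real.log a with hu
  set v : ℝ := Real.log c - Real.log a with hv
  set w : ℝ := Real.log d - Real.log a with hw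
  have h0u : 0 < u := sub_pos.2 (Real.log_lt_log ha hab)
  have huv : u < v := sub_lt_sub_right (Real.log_lt_log hb hbc) _
  have hvw : v < w := sub_lt_sub_right (Real.log_lt_log hc hcd) _
  -- bridge between the rpow equation and Gf
  have key : ∀ p : ℝ, Real.exp (Real.log a * p) * Gf u v w p
      = a ^ p + d ^ p - b ^ p - c ^ p := by
    intro p
    rw [Real.rpow_def_of_pos ha, Real.rpow_def_of_pos hb, Real.rpow_def_of_pos hc,
      Real.rpow_def_of_pos hd]
    have e1 : Real.exp (Real.log a * p) * Real.exp (u * p) = Real.exp (Real.log b * p) := by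
      rw [← Real.exp_add, hu]; ring_nf
    have e2 : Real.exp (Real.log a * p) * Real.exp (v * p) = Real.exp (Real.log c * p) := by
      rw [← Real.exp_add, hv]; ring_nf
    have e3 : Real.exp (Real.log a * p) * Real.exp (w * p) = Real.exp (Real.log d * p) := by
      rw [← Real.exp_add, hw]; ring_nf
    simp only [Gf]
    linear_combination -e1 - e2 + e3
  have bridge : ∀ p : ℝ, (a ^ p + d ^ p = b ^ p + c ^ p) ↔ Gf u v w p = 0 := by
    intro p
    constructor
    · intro h
      have h2 := key p
      rw [show a ^ p + d ^ p - b ^ p - c ^ p = 0 by linarith] at h2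
      exact (mul_eq_zero.1 h2).resolve_left (Real.exp_ne_zero _)
    · intro h
      have h2 := key p
      rw [h, mul_zero] at h2
      linarith
  -- bridge between w = u + v and a*d = b*c
  have prodbridge : a * d = b * c ↔ w = u + v := by
    have l1 : Real.log (a * d) = Real.log a + Real.log d := Real.log_mul (ne_of_gt ha) (ne_of_gt hd)
    have l2 : Real.log (b * c) = Real.log b + Real.log c := Real.log_mul (ne_of_gt hb) (ne_of_gt hc)
    constructor
    · intro h
      have : Real.log (a * d) = Real.log (b * c) := by rw [h]
      rw [l1, l2] at this
      rw [hu, hv, hw]; linarith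
    · intro h
      have hlog : Real.log (a * d) = Real.log (b * c) := by
        rw [l1, l2]; rw [hu, hv, hw] at h; linarith
      calc a * d = Real.exp (Real.log (a * d)) := (Real.exp_log (by positivity)).symm
        _ = Real.exp (Real.log (b * c)) := by rw [hlog]
        _ = b * c := Real.exp_log (by positivity)
  obtain ⟨ρ, hiff, hρ0, huniq⟩ := gf_key u v w h0u huv hvw
  refine ⟨ρ, ?_, ?_⟩
  · by_cases h : ρ = 0
    · exact Or.inr ⟨h, prodbridge.2 (hiff.1 h)⟩
    · exact Or.inl ⟨h, (bridge ρ).2 hρ0⟩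
  · rintro q (⟨hq0, heq⟩ | ⟨hq0, hprod⟩)
    · rcases huniq q ((bridge q).1 heq) with h | h
      · exact absurd h hq0
      · exact h
    · rw [hq0]
      exact (hiff.2 (prodbridge.1 hprod)).symm


/-- `(a, b, c, d)` is an analogy in power `p`: either `p ≠ 0` and the sums of the
`p`-th powers of extremes and means agree, or `p = 0` and the products agree
(equality of geometric means). -/
def AnalogyPow (a b c d p : ℝ) : Prop :=
  (p ≠ 0 ∧ a ^ p + d ^ p = b ^ p + c ^ p) ∨ (p = 0 ∧ a * d = b * c)

theorem exists_unique_analogy_pow (a b c d : ℝ)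
    (ha : 0 < a) (hab : a < b) (hbc : b < c) (hcd : c < d) :
    ∃! p : ℝ, AnalogyPow a b c d p := by
  unfold AnalogyPow
  exact exists_unique_analogy_pow_aux a b c d ha hab hbc hcd
end

section
/- Let a, b, c, d be real numbers with 0 < a < b < c < d. Then there exists a real number p such that (a, b, c, d) is an analogy in power p, i.e., there exists p ∈ ℝ with either (p ≠ 0 and a^p + d^p = b^p + c^p) or (p = 0 and a·d = b·c). -/
open Real Filter Topology

lemma aux_exists (a b c d : ℝ) (ha : 0 < a) (hab : a < b) (hbc : b < c) (hcd : c < d)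
    (h : a * d < b * c) : ∃ p : ℝ, 0 < p ∧ a ^ p + d ^ p = b ^ p + c ^ p := by
  have hb : 0 < b := ha.trans hab
  have hc : 0 < c := hb.trans hbc
  have hd : 0 < d := hc.trans hcd
  set f : ℝ → ℝ := fun p => a ^ p + d ^ p - (b ^ p + c ^ p) with hf
  have hca : ∀ {x : ℝ}, 0 < x → Continuous (fun p : ℝ => x ^ p) := fun hx =>
    continuous_iff_continuousAt.2 fun _ => Real.continuousAt_const_rpow hx.ne'
  have hcont : Continuous f := ((hca ha).add (hca hd)).sub ((hca hb).add (hca hc))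
  have hf0 : f 0 = 0 := by simp [hf]
  have hderiv : HasDerivAt f (Real.log a + Real.log d - (Real.log b + Real.log c)) 0 := by
    have h1 := (hasStrictDerivAt_const_rpow ha 0).hasDerivAt
    have h2 := (hasStrictDerivAt_const_rpow hd 0).hasDerivAt
    have h3 := (hasStrictDerivAt_const_rpow hb 0).hasDerivAt
    have h4 := (hasStrictDerivAt_const_rpow hc 0).hasDerivAt
    have h5 := (h1.add h2).sub (h3.add h4)
    simp only [Real.rpow_zero, one_mul] at h5
    exact h5
  have hL : Real.log a + Real.log d - (Real.log b + Real.log c) < 0 := by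
    have := Real.log_lt_log (by positivity) h
    rw [Real.log_mul ha.ne' hd.ne', Real.log_mul hb.ne' hc.ne'] at this
    linarith
  obtain ⟨ε, hεpos, hεneg⟩ : ∃ ε : ℝ, 0 < ε ∧ f ε < 0 := by
    have hslope := hderiv.hasDerivWithinAt (s := Set.Ioi 0)
    rw [hasDerivWithinAt_iff_tendsto_slope] at hslope
    rw [Set.diff_singleton_eq_self (by simp)] at hslope
    have h1 : ∀ᶠ p in 𝓝[>] (0:ℝ), slope f 0 p < 0 := hslope.eventually_lt_const hL
    have h2 : ∀ᶠ p in 𝓝[>] (0:ℝ), (0:ℝ) < p := eventually_mem_nhdsWithin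
    obtain ⟨ε, hs, hε⟩ := (h1.and h2).exists
    refine ⟨ε, hε, ?_⟩
    rw [slope_def_field, hf0] at hs
    have hdiv : (f ε - 0) / (ε - 0) < 0 := by simpa [div_eq_inv_mul] using hs
    rw [sub_zero, sub_zero] at hdiv
    rcases div_neg_iff.mp hdiv with ⟨_, h'⟩ | ⟨h', _⟩ <;> linarith
  -- f is eventually positive at infinity
  set g : ℝ → ℝ := fun p => (a / d) ^ p + 1 - ((b / d) ^ p + (c / d) ^ p) with hg
  have tz : ∀ x : ℝ, 0 < x → x < d → Tendsto (fun p : ℝ => (x / d) ^ p) atTop (𝓝 0) := by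
    intro x hx hxd
    have h0 : (0:ℝ) < x / d := by positivity
    exact tendsto_rpow_atTop_of_base_lt_one _ (by linarith) ((div_lt_one hd).2 hxd)
  have hgt : Tendsto g atTop (𝓝 1) := by
    have : Tendsto (fun p : ℝ => (a/d) ^ p + 1 - ((b/d) ^ p + (c/d) ^ p)) atTop
        (𝓝 (0 + 1 - (0 + 0))) :=
      ((tz a ha (hab.trans (hbc.trans hcd))).add (tendsto_const_nhds (x := (1:ℝ)))).sub
        ((tz b hb (hbc.trans hcd)).add (tz c hc hcd))
    simpa using this
  have hev : ∀ᶠ p in atTop, 0 < g p := hgt.eventually_const_lt (by norm_num)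
  obtain ⟨P, hgP, hεP⟩ := (hev.and (eventually_gt_atTop ε)).exists
  have hxid : ∀ x : ℝ, 0 ≤ x → d ^ P * (x / d) ^ P = x ^ P := by
    intro x hx
    rw [Real.div_rpow hx hd.le, mul_comm, div_mul_cancel₀ _ (Real.rpow_pos_of_pos hd P).ne']
  have hfP : f P = d ^ P * g P := by
    simp only [hf, hg, mul_sub, mul_add, mul_one, hxid a ha.le, hxid b hb.le, hxid c hc.le]
  have hfpos : 0 < f P := by
    rw [hfP]; exact mul_pos (Real.rpow_pos_of_pos hd P) hgP
  obtain ⟨p, hp_mem, hp⟩ := intermediate_value_Icc hεP.le hcont.continuousOn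
    (show (0:ℝ) ∈ Set.Icc (f ε) (f P) from ⟨hεneg.le, hfpos.le⟩)
  refine ⟨p, hεpos.trans_le hp_mem.1, ?_⟩
  have : a ^ p + d ^ p - (b ^ p + c ^ p) = 0 := hp
  linarith

theorem exists_analogy_pow (a b c d : ℝ)
    (ha : 0 < a) (hab : a < b) (hbc : b < c) (hcd : c < d) :
    ∃ p : ℝ, AnalogyPow a b c d p := by
  have hb : 0 < b := ha.trans hab
  have hc : 0 < c := hb.trans hbc
  have hd : 0 < d := hc.trans hcd
  rcases lt_trichotomy (a * d) (b * c) with hlt | heq | hgt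
  · obtain ⟨p, hp, heq⟩ := aux_exists a b c d ha hab hbc hcd hlt
    exact ⟨p, Or.inl ⟨hp.ne', heq⟩⟩
  · exact ⟨0, Or.inr ⟨rfl, heq⟩⟩
  · have h1 : d⁻¹ < c⁻¹ := by rw [inv_lt_inv₀ hd hc]; exact hcd
    have h2 : c⁻¹ < b⁻¹ := by rw [inv_lt_inv₀ hc hb]; exact hbc
    have h3 : b⁻¹ < a⁻¹ := by rw [inv_lt_inv₀ hb ha]; exact hab
    have h4 : d⁻¹ * a⁻¹ < c⁻¹ * b⁻¹ := by
      rw [← mul_inv, ← mul_inv, inv_lt_inv₀ (by positivity) (by positivity)]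
      linarith [hgt]
    obtain ⟨p, hp, heq⟩ := aux_exists d⁻¹ c⁻¹ b⁻¹ a⁻¹ (by positivity) h1 h2 h3 h4
    refine ⟨-p, Or.inl ⟨neg_ne_zero.2 hp.ne', ?_⟩⟩
    rw [Real.inv_rpow hd.le, Real.inv_rpow hc.le, Real.inv_rpow hb.le, Real.inv_rpow ha.le,
      ← Real.rpow_neg hd.le, ← Real.rpow_neg hc.le, ← Real.rpow_neg hb.le,
      ← Real.rpow_neg ha.le] at heq
    linarith [heq]
end

section
/- Let a, b, c, d be real numbers with 0 < a < b < c < d, and let p, q be real numbers such that (a, b, c, d) is an analogy in power p and also an analogy in power q. Then p = q. -/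
/-- `(x^r - 1)/r`, extended by `log x` at `r = 0`. -/
noncomputable def Gfun (x r : ℝ) : ℝ := if r = 0 then Real.log x else (x ^ r - 1) / r

lemma bern {x s : ℝ} (hx : 0 < x) (hs : 1 ≤ s) : 1 + s * (x - 1) ≤ x ^ s := by
  have h := one_add_mul_self_le_rpow_one_add (by linarith : (-1:ℝ) ≤ x - 1) hs
  simpa using h

lemma Gfun_zero (x : ℝ) : Gfun x 0 = Real.log x := if_pos rfl

lemma Gfun_pos {x : ℝ} (hx : 1 < x) (r : ℝ) : 0 < Gfun x r := by
  unfold Gfun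
  split_ifs with h
  · exact Real.log_pos hx
  · rcases lt_or_gt_of_ne h with hr | hr
    · apply div_pos_of_neg_of_neg
      · have : x ^ r < 1 := Real.rpow_lt_one_of_one_lt_of_neg hx hr
        linarith
      · exact hr
    · apply div_pos
      · have : 1 < x ^ r :=
          (Real.one_lt_rpow_iff_of_pos (by linarith)).mpr (Or.inl ⟨hx, hr⟩)
        linarith
      · exact hr

lemma Gfun_log_le {x r : ℝ} (hx : 0 < x) (hr : 0 < r) : Real.log x ≤ Gfun x r := by
  unfold Gfun
  rw [if_neg hr.ne']
  have h1 : x ^ r = Real.exp (Real.log x * r) := Real.rpow_def_of_pos hx r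
  have h2 : Real.log x * r + 1 ≤ Real.exp (Real.log x * r) := Real.add_one_le_exp _
  rw [le_div_iff₀ hr]
  nlinarith [h1 ▸ h2]

lemma Gfun_le_log {x r : ℝ} (hx : 0 < x) (hr : r < 0) : Gfun x r ≤ Real.log x := by
  unfold Gfun
  rw [if_neg hr.ne]
  have h1 : x ^ r = Real.exp (Real.log x * r) := Real.rpow_def_of_pos hx r
  have h2 : Real.log x * r + 1 ≤ Real.exp (Real.log x * r) := Real.add_one_le_exp _
  rw [div_le_iff_of_neg hr]
  nlinarith [h1 ▸ h2]

lemma Gfun_mono {x : ℝ} (hx : 0 < x) {p q : ℝ} (hpq : p ≤ q) : Gfun x p ≤ Gfun x q := by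
  rcases eq_or_lt_of_le hpq with rfl | hlt
  · exact le_rfl
  rcases lt_trichotomy p 0 with hp | rfl | hp
  · rcases lt_trichotomy q 0 with hq | rfl | hq
    · -- p < q < 0
      have hs : 1 ≤ p / q := (one_le_div_of_neg hq).mpr hpq
      have hy : 0 < x ^ q := Real.rpow_pos_of_pos hx q
      have hxp : x ^ p = (x ^ q) ^ (p / q) := by
        rw [← Real.rpow_mul hx.le]
        congr 1
        rw [mul_comm]
        exact (div_mul_cancel₀ p hq.ne).symm
      have hb := bern hy hs
      rw [← hxp] at hb
      have h3 : p / q * q = p := div_mul_cancel₀ p hq.ne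
      have key : q * (x ^ p - 1) ≤ p * (x ^ q - 1) := by nlinarith [hb]
      unfold Gfun
      rw [if_neg hp.ne, if_neg hq.ne]
      have h4 : (x ^ p - 1) / p - (x ^ q - 1) / q
          = (q * (x ^ p - 1) - p * (x ^ q - 1)) / (p * q) := by
        field_simp [hp.ne, hq.ne]
      have h5 : 0 < p * q := mul_pos_of_neg_of_neg hp hq
      have h6 : (q * (x ^ p - 1) - p * (x ^ q - 1)) / (p * q) ≤ 0 :=
        div_nonpos_of_nonpos_of_nonneg (by linarith) h5.le
      linarith [h4 ▸ h6]
    · rw [Gfun_zero]; exact Gfun_le_log hx hp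
    · exact le_trans (Gfun_le_log hx hp) (Gfun_log_le hx hq)
  · rw [Gfun_zero]; exact Gfun_log_le hx hlt
  · -- 0 < p < q
    have hq : 0 < q := lt_trans hp hlt
    have hs : 1 ≤ q / p := (one_le_div hp).mpr hpq
    have hy : 0 < x ^ p := Real.rpow_pos_of_pos hx p
    have hxq : x ^ q = (x ^ p) ^ (q / p) := by
      rw [← Real.rpow_mul hx.le]
      congr 1
      rw [mul_comm]
      exact (div_mul_cancel₀ q hp.ne').symm
    have hb := bern hy hs
    rw [← hxq] at hb
    have h3 : q / p * p = q := div_mul_cancel₀ q hp.ne' 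
    have key : q * (x ^ p - 1) ≤ p * (x ^ q - 1) := by nlinarith [hb]
    unfold Gfun
    rw [if_neg hp.ne', if_neg hq.ne']
    rw [div_le_div_iff₀ hp hq]
    nlinarith [key]

lemma analogy_key {a b c d r : ℝ} (ha : 0 < a) (hab : a < b) (hbc : b < c) (hcd : c < d)
    (h : AnalogyPow a b c d r) :
    c ^ r * Gfun (d / c) r = b ^ r * Gfun (b / a) (-r) := by
  have hb0 : (0:ℝ) < b := ha.trans hab
  have hc0 : (0:ℝ) < c := hb0.trans hbc
  have hd0 : (0:ℝ) < d := hc0.trans hcd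
  rcases h with ⟨hr, heq⟩ | ⟨rfl, heq⟩
  · unfold Gfun
    rw [if_neg hr, if_neg (neg_ne_zero.mpr hr)]
    have h1 : (d / c) ^ r = d ^ r / c ^ r := Real.div_rpow hd0.le hc0.le r
    have h2 : (b / a) ^ (-r) = a ^ r / b ^ r := by
      rw [Real.rpow_neg (by positivity), Real.div_rpow hb0.le ha.le, inv_div]
    have hbr : b ^ r ≠ 0 := (Real.rpow_pos_of_pos hb0 r).ne'
    have hcr : c ^ r ≠ 0 := (Real.rpow_pos_of_pos hc0 r).ne'
    have l1 : c ^ r * ((d ^ r / c ^ r - 1) / r) = (d ^ r - c ^ r) / r := by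
      field_simp
    have l2 : b ^ r * ((a ^ r / b ^ r - 1) / (-r)) = (b ^ r - a ^ r) / r := by
      field_simp
      ring
    rw [h1, h2, l1, l2]
    have hde : d ^ r - c ^ r = b ^ r - a ^ r := by linarith
    rw [hde]
  · unfold Gfun
    rw [if_pos rfl, neg_zero, if_pos rfl]
    simp only [Real.rpow_zero, one_mul]
    have hda : d / c = b / a := by
      rw [div_eq_div_iff hc0.ne' ha.ne']
      linarith
    rw [hda]

lemma analogy_aux (a b c d p q : ℝ)
    (ha : 0 < a) (hab : a < b) (hbc : b < c) (hcd : c < d)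
    (hp : AnalogyPow a b c d p) (hq : AnalogyPow a b c d q) (hpq : p ≤ q) :
    p = q := by
  by_contra hne
  have hlt : p < q := lt_of_le_of_ne hpq hne
  have hb0 : (0:ℝ) < b := ha.trans hab
  have hc0 : (0:ℝ) < c := hb0.trans hbc
  have hd0 : (0:ℝ) < d := hc0.trans hcd
  have hdc : 1 < d / c := (one_lt_div hc0).mpr hcd
  have hba : 1 < b / a := (one_lt_div ha).mpr hab
  have e1 := analogy_key ha hab hbc hcd hp
  have e2 := analogy_key ha hab hbc hcd hq
  have hL : Gfun (d / c) p ≤ Gfun (d / c) q := Gfun_mono (by linarith) hpq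
  have hH : Gfun (b / a) (-q) ≤ Gfun (b / a) (-p) := Gfun_mono (by linarith) (by linarith)
  have hLp : 0 < Gfun (d / c) p := Gfun_pos hdc p
  have hHq : 0 < Gfun (b / a) (-q) := Gfun_pos hba (-q)
  have hcp : 0 < c ^ p := Real.rpow_pos_of_pos hc0 p
  have hbp : 0 < b ^ p := Real.rpow_pos_of_pos hb0 p
  have hcq : c ^ q = c ^ p * c ^ (q - p) := by
    rw [← Real.rpow_add hc0]; congr 1; ring
  have hbq : b ^ q = b ^ p * b ^ (q - p) := by
    rw [← Real.rpow_add hb0]; congr 1; ring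
  have hbc' : b ^ (q - p) < c ^ (q - p) :=
    Real.rpow_lt_rpow hb0.le hbc (by linarith)
  have hcqp : 0 < c ^ (q - p) := Real.rpow_pos_of_pos hc0 _
  have hbqp : 0 < b ^ (q - p) := Real.rpow_pos_of_pos hb0 _
  -- chain: c^q * L p ≤ c^q * L q = b^q * H q ≤ b^q * H p = b^(q-p) * (b^p * H p)
  --      = b^(q-p) * (c^p * L p) < c^(q-p) * (c^p * L p) = c^q * L p
  have hcq0 : 0 < c ^ q := Real.rpow_pos_of_pos hc0 q
  have hbq0 : 0 < b ^ q := Real.rpow_pos_of_pos hb0 q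
  have s1 : c ^ q * Gfun (d / c) p ≤ b ^ q * Gfun (b / a) (-p) := by
    calc c ^ q * Gfun (d / c) p ≤ c ^ q * Gfun (d / c) q := by
          exact mul_le_mul_of_nonneg_left hL hcq0.le
      _ = b ^ q * Gfun (b / a) (-q) := e2
      _ ≤ b ^ q * Gfun (b / a) (-p) := mul_le_mul_of_nonneg_left hH hbq0.le
  rw [hcq, hbq] at s1
  have s2 : b ^ p * Gfun (b / a) (-p) = c ^ p * Gfun (d / c) p := e1.symm
  nlinarith [s1, s2, hbc', hLp, hcp, hbqp, hcqp, mul_pos hcp hLp]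

theorem analogy_pow_unique (a b c d p q : ℝ)
    (ha : 0 < a) (hab : a < b) (hbc : b < c) (hcd : c < d)
    (hp : AnalogyPow a b c d p) (hq : AnalogyPow a b c d q) :
    p = q := by
  rcases le_total p q with h | h
  · exact analogy_aux a b c d p q ha hab hbc hcd hp hq h
  · exact (analogy_aux a b c d q p ha hab hbc hcd hq hp h).symm
end

section
/- Let a, b, c be real numbers with 0 < a < b < c < 1. Then there do not exist real numbers r and q with 0 < r < q such that both a^r + 1 = b^r + c^r and a^q + 1 = b^q + c^q hold (real-exponent powers). -/
theorem no_two_positive_powers (a b c : ℝ)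
    (ha : 0 < a) (hab : a < b) (hbc : b < c) (hc1 : c < 1) :
    ¬ ∃ r q : ℝ, 0 < r ∧ r < q ∧
      a ^ r + 1 = b ^ r + c ^ r ∧ a ^ q + 1 = b ^ q + c ^ q := by
  rintro ⟨r, q, hr, hrq, h1, h2⟩
  have hb : 0 < b := ha.trans hab
  have hc : 0 < c := hb.trans hbc
  set t := q / r with ht_def
  have ht : 1 < t := (one_lt_div hr).mpr hrq
  set A := a ^ r with hA_def
  set B := b ^ r with hB_def
  set C := c ^ r with hC_def
  have hA : 0 < A := Real.rpow_pos_of_pos ha r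
  have hB : 0 < B := Real.rpow_pos_of_pos hb r
  have hAB : A < B := Real.rpow_lt_rpow ha.le hab hr
  have hBC : B < C := Real.rpow_lt_rpow hb.le hbc hr
  have hC1 : C < 1 := Real.rpow_lt_one hc.le hc1 hr
  have hq : q = r * t := by rw [ht_def, mul_div_assoc', eq_div_iff hr.ne', mul_comm]
  have e : ∀ x : ℝ, 0 < x → x ^ q = (x ^ r) ^ t := fun x hx => by
    rw [hq, Real.rpow_mul hx.le]
  have h2' : A ^ t + 1 = B ^ t + C ^ t := by
    rw [hA_def, hB_def, hC_def, ← e a ha, ← e b hb, ← e c hc]; exact h2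
  -- strict convexity of x ↦ x^t
  have hconv := strictConvexOn_rpow ht
  set l : ℝ := (1 - B) / (1 - A) with hl_def
  have hA1 : A < 1 := hAB.trans (hBC.trans hC1)
  have hB1 : B < 1 := hBC.trans hC1
  have hl0 : 0 < l := div_pos (by linarith) (by linarith)
  have hl1 : l < 1 := (div_lt_one (by linarith)).mpr (by linarith)
  have hA1' : (1 : ℝ) - A ≠ 0 := by linarith
  have hkey : l * (1 - A) = 1 - B := by
    rw [hl_def, div_mul_cancel₀ _ hA1']
  have hBeq : l * A + (1 - l) = B := by linarith [hkey]
  have hCeq : (1 - l) * A + l = C := by nlinarith [hkey, h1]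
  have hne : A ≠ (1 : ℝ) := ne_of_lt hA1
  have memA : A ∈ Set.Ici (0 : ℝ) := hA.le
  have mem1 : (1 : ℝ) ∈ Set.Ici (0 : ℝ) := by norm_num
  have hBlt : B ^ t < l * A ^ t + (1 - l) * (1:ℝ) ^ t := by
    have h := hconv.2 memA mem1 hne hl0 (by linarith : (0:ℝ) < 1 - l) (by ring)
    simp only [smul_eq_mul, mul_one] at h
    rwa [hBeq] at h
  have hClt : C ^ t < (1 - l) * A ^ t + l * (1:ℝ) ^ t := by
    have h := hconv.2 memA mem1 hne (by linarith : (0:ℝ) < 1 - l) hl0 (by ring)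
    simp only [smul_eq_mul, mul_one] at h
    rwa [hCeq] at h
  have : B ^ t + C ^ t < A ^ t + 1 := by
    have h1t : (1 : ℝ) ^ t = 1 := Real.one_rpow t
    nlinarith [hBlt, hClt]
  linarith [h2']
end

section
/- Let p be a nonzero real number, let a, b, c, d be positive real numbers, and let λ be a nonzero complex number. Then a^p + d^p = b^p + c^p (as real numbers, real-exponent powers) if and only if (λ·a)^p + (λ·d)^p = (λ·b)^p + (λ·c)^p (as complex numbers, where a, b, c, d are coerced into ℂ and powers are principal complex powers z^p = exp(p·Log z)). -/
open Complex

lemma mul_ofReal_cpow (x : ℂ) (hx : x ≠ 0) {r : ℝ} (hr : 0 < r) (p : ℂ) :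
    (x * (r : ℂ)) ^ p = x ^ p * (r : ℂ) ^ p := by
  have hr' : (r : ℂ) ≠ 0 := ofReal_ne_zero.mpr hr.ne'
  rw [cpow_def_of_ne_zero (mul_ne_zero hx hr'), log_mul_ofReal r hr x hx,
    cpow_def_of_ne_zero hx, cpow_def_of_ne_zero hr', add_mul, exp_add, mul_comm,
    ofReal_log hr.le]

theorem analogy_pow_complex_mul_invariant (p : ℝ) (hp : p ≠ 0)
    (a b c d : ℝ) (ha : 0 < a) (hb : 0 < b) (hc : 0 < c) (hd : 0 < d)
    (l : ℂ) (hl : l ≠ 0) :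
    a ^ p + d ^ p = b ^ p + c ^ p ↔
      (l * (a : ℂ)) ^ (p : ℂ) + (l * (d : ℂ)) ^ (p : ℂ) =
        (l * (b : ℂ)) ^ (p : ℂ) + (l * (c : ℂ)) ^ (p : ℂ) := by
  have hlp : l ^ (p : ℂ) ≠ 0 := by rw [cpow_def_of_ne_zero hl]; exact exp_ne_zero _
  rw [mul_ofReal_cpow l hl ha, mul_ofReal_cpow l hl hb, mul_ofReal_cpow l hl hc,
    mul_ofReal_cpow l hl hd, ← mul_add, ← mul_add]
  constructor
  · intro h
    congr 1
    rw [← ofReal_cpow ha.le, ← ofReal_cpow hb.le, ← ofReal_cpow hc.le, ← ofReal_cpow hd.le,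
      ← ofReal_add, ← ofReal_add, h]
  · intro h
    have := mul_left_cancel₀ hlp h
    rw [← ofReal_cpow ha.le, ← ofReal_cpow hb.le, ← ofReal_cpow hc.le, ← ofReal_cpow hd.le,
      ← ofReal_add, ← ofReal_add] at this
    exact_mod_cast this
end

section
/- Let a and b be positive real numbers. Then the function g : ℝ → ℝ defined by g(p) = ((a^p + b^p)/2)^(1/p) for p ≠ 0 and g(0) = √(a·b) is continuous on all of ℝ. -/
open Real Filter Topology

theorem generalized_mean_continuous (a b : ℝ) (ha : 0 < a) (hb : 0 < b)
    (g : ℝ → ℝ)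
    (hg : ∀ p : ℝ, p ≠ 0 → g p = ((a ^ p + b ^ p) / 2) ^ (1 / p))
    (hg0 : g 0 = Real.sqrt (a * b)) :
    Continuous g := by
  have hpos : ∀ p : ℝ, 0 < (a ^ p + b ^ p) / 2 := fun p =>
    div_pos (add_pos (rpow_pos_of_pos ha p) (rpow_pos_of_pos hb p)) two_pos
  set h : ℝ → ℝ := fun p => Real.log ((a ^ p + b ^ p) / 2) with hh
  have h0 : h 0 = 0 := by
    simp [hh]
  have hderiv : HasDerivAt h ((Real.log a + Real.log b) / 2) 0 := by
    have h1 : HasDerivAt (fun p : ℝ => a ^ p) (a ^ (0 : ℝ) * Real.log a) 0 :=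
      (Real.hasStrictDerivAt_const_rpow ha 0).hasDerivAt
    have h2 : HasDerivAt (fun p : ℝ => b ^ p) (b ^ (0 : ℝ) * Real.log b) 0 :=
      (Real.hasStrictDerivAt_const_rpow hb 0).hasDerivAt
    have h3 := ((h1.add h2).div_const 2).log (hpos 0).ne'
    convert h3 using 1
    rfl
    simp [Real.rpow_zero]
  have hsq : Real.sqrt (a * b) = Real.exp ((Real.log a + Real.log b) / 2) := by
    rw [Real.sqrt_eq_rpow, Real.rpow_def_of_pos (mul_pos ha hb),
      Real.log_mul ha.ne' hb.ne']
    congr 1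
    ring
  rw [continuous_iff_continuousAt]
  intro p
  rcases eq_or_ne p 0 with rfl | hp
  · have hs : Tendsto (slope h 0) (𝓝[≠] (0 : ℝ)) (𝓝 ((Real.log a + Real.log b) / 2)) :=
      hasDerivAt_iff_tendsto_slope.mp hderiv
    have htend : Tendsto g (𝓝[≠] (0 : ℝ)) (𝓝 (Real.sqrt (a * b))) := by
      rw [hsq]
      have hexp : Tendsto (fun p => Real.exp (slope h 0 p)) (𝓝[≠] (0 : ℝ))
          (𝓝 (Real.exp ((Real.log a + Real.log b) / 2))) :=
        (Real.continuous_exp.tendsto _).comp hs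
      refine hexp.congr' ?_
      filter_upwards [self_mem_nhdsWithin] with q hq
      have hq' : (q : ℝ) ≠ 0 := hq
      rw [slope_def_field, h0, sub_zero, hg q hq', hh,
        Real.rpow_def_of_pos (hpos q)]
      congr 1
      field_simp
      ring
    rw [ContinuousAt, ← nhdsNE_sup_pure, tendsto_sup]
    exact ⟨by rwa [hg0], by simpa [hg0] using tendsto_pure_nhds g 0⟩
  · have hcont : ContinuousAt (fun q : ℝ => ((a ^ q + b ^ q) / 2) ^ (1 / q)) p := by
      have hbase : Continuous fun q : ℝ => (a ^ q + b ^ q) / 2 :=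
        ((continuous_const.rpow continuous_id fun _ => Or.inl ha.ne').add
          (continuous_const.rpow continuous_id fun _ => Or.inl hb.ne')).div_const 2
      have hexp : ContinuousAt (fun q : ℝ => 1 / q) p :=
        continuousAt_const.div continuousAt_id hp
      exact (hbase.continuousAt).rpow hexp (Or.inl (hpos p).ne')
    refine hcont.congr ?_
    filter_upwards [isOpen_ne.mem_nhds hp] with q hq
    exact (hg q hq).symm
end

section
/- Let p be a real number with |p| ≥ 1, and let a, b, c be nonzero complex numbers such that b^p + c^p ≠ a^p (principal complex powers z^p = exp(p·Log z)). Then there exists a nonzero complex number x such that a^p + x^p = b^p + c^p. That is, the analogical equation a : b ::^p c : x is solvable over the nonzero complex numbers. -/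
open Complex Real

theorem analogical_equation_solvable_complex (p : ℝ) (hp : 1 ≤ |p|)
    (a b c : ℂ) (ha : a ≠ 0) (hb : b ≠ 0) (hc : c ≠ 0)
    (h : b ^ (p : ℂ) + c ^ (p : ℂ) ≠ a ^ (p : ℂ)) :
    ∃ x : ℂ, x ≠ 0 ∧ a ^ (p : ℂ) + x ^ (p : ℂ) = b ^ (p : ℂ) + c ^ (p : ℂ) := by
  set w : ℂ := b ^ (p : ℂ) + c ^ (p : ℂ) - a ^ (p : ℂ) with hw
  have hw0 : w ≠ 0 := sub_ne_zero.mpr h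
  have hp0 : p ≠ 0 := by
    intro h0; rw [h0] at hp; simp at hp; linarith
  rcases eq_or_ne p (-1) with hpm | hpm
  · refine ⟨w⁻¹, inv_ne_zero hw0, ?_⟩
    have : ((p : ℂ)) = -1 := by rw [hpm]; push_cast; ring
    have key : w⁻¹ ^ (p : ℂ) = w := by rw [this, cpow_neg_one, inv_inv]
    rw [key, hw]; ring
  · refine ⟨w ^ ((p⁻¹ : ℝ) : ℂ), ?_, ?_⟩
    · simp [cpow_eq_zero_iff, hw0]
    · have him : (Complex.log w * ((p⁻¹ : ℝ) : ℂ)).im = p⁻¹ * w.arg := by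
        simp [Complex.mul_im, Complex.log_im, Complex.log_re]
        ring
      have harg1 : -π < w.arg := Complex.neg_pi_lt_arg w
      have harg2 : w.arg ≤ π := Complex.arg_le_pi w
      have hpi : (0:ℝ) < π := Real.pi_pos
      have h1 : -π < (Complex.log w * ((p⁻¹ : ℝ) : ℂ)).im := by
        rw [him]
        rcases abs_cases p with ⟨he, hpos⟩ | ⟨he, hneg⟩
        · have hp1 : 1 ≤ p := by linarith
          have : (0:ℝ) < p⁻¹ := by positivity
          have : p⁻¹ ≤ 1 := by
            rw [inv_le_one_iff₀]; right; exact hp1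
          nlinarith
        · have hp1 : p < -1 := lt_of_le_of_ne (by linarith) hpm
          have hinv : p * p⁻¹ = 1 := mul_inv_cancel₀ hp0
          have h3 : p⁻¹ < 0 := inv_neg''.mpr (by linarith)
          have h2 : -1 < p⁻¹ := by nlinarith
          nlinarith
      have h2 : (Complex.log w * ((p⁻¹ : ℝ) : ℂ)).im ≤ π := by
        rw [him]
        rcases abs_cases p with ⟨he, hpos⟩ | ⟨he, hneg⟩
        · have hp1 : 1 ≤ p := by linarith
          have : (0:ℝ) < p⁻¹ := by positivity
          have : p⁻¹ ≤ 1 := by rw [inv_le_one_iff₀]; right; exact hp1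
          nlinarith
        · have hp1 : p < -1 := lt_of_le_of_ne (by linarith) hpm
          have hinv : p * p⁻¹ = 1 := mul_inv_cancel₀ hp0
          have h3 : p⁻¹ < 0 := inv_neg''.mpr (by linarith)
          have h2 : -1 < p⁻¹ := by nlinarith
          nlinarith
      have key : (w ^ ((p⁻¹ : ℝ) : ℂ)) ^ (p : ℂ) = w := by
        rw [← Complex.cpow_mul _ h1 h2]
        have : ((p⁻¹ : ℝ) : ℂ) * (p : ℂ) = 1 := by
          rw [← Complex.ofReal_mul, inv_mul_cancel₀ hp0, Complex.ofReal_one]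
        rw [this, cpow_one]
      rw [key, hw]; ring
end

section
/- Let a, b, c, d be pairwise distinct positive real numbers. Then there exists a real number p such that (a, b, c, d) is an analogy in power p if and only if either (min(a, d) < min(b, c) and max(b, c) < max(a, d)) or (min(b, c) < min(a, d) and max(a, d) < max(b, c)); that is, if and only if the extremes a, d strictly frame the means b, c, or the means strictly frame the extremes. -/
open Real Filter Set Topology

private lemma exp_le_half (x y : ℝ) (h : x - y ≤ -Real.log 2) :
    Real.exp x ≤ Real.exp y / 2 := by
  have e : Real.exp x = Real.exp y * Real.exp (x - y) := by
    rw [← Real.exp_add]; ring_nf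
  have h2 : Real.exp (x - y) ≤ Real.exp (-Real.log 2) := Real.exp_le_exp.mpr h
  rw [Real.exp_neg, Real.exp_log (by norm_num : (0:ℝ) < 2)] at h2
  have hy := (Real.exp_pos y).le
  rw [e, div_eq_mul_inv]
  exact mul_le_mul_of_nonneg_left h2 hy

private lemma core_exp (α β γ δ : ℝ) (h1 : α < γ) (h2 : γ ≤ δ) (h3 : δ < β)
    (h4 : α + β ≠ γ + δ) :
    ∃ p : ℝ, p ≠ 0 ∧
      Real.exp (α * p) + Real.exp (β * p) = Real.exp (γ * p) + Real.exp (δ * p) := by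
  set f : ℝ → ℝ :=
    fun p => (Real.exp (α * p) + Real.exp (β * p)) - (Real.exp (γ * p) + Real.exp (δ * p))
    with hf
  have hcont : Continuous f := by fun_prop
  have hf0 : f 0 = 0 := by simp [hf]
  have hlog2 : 0 < Real.log 2 := Real.log_pos (by norm_num)
  have hd : ∀ c : ℝ, HasDerivAt (fun p : ℝ => Real.exp (c * p)) c 0 := by
    intro c
    have h := ((hasDerivAt_id (0 : ℝ)).const_mul c).exp
    simpa using h
  have hL : HasDerivAt f ((α + β) - (γ + δ)) 0 := ((hd α).add (hd β)).sub ((hd γ).add (hd δ))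
  have hs := hasDerivAt_iff_tendsto_slope.mp hL
  -- f is positive far to the left
  have hfneg : ∀ p : ℝ, (γ - α) * p ≤ -Real.log 2 → (δ - α) * p ≤ -Real.log 2 → 0 < f p := by
    intro p hg hdd
    have e1 : Real.exp (γ * p) ≤ Real.exp (α * p) / 2 := exp_le_half _ _ (by nlinarith)
    have e2 : Real.exp (δ * p) ≤ Real.exp (α * p) / 2 := exp_le_half _ _ (by nlinarith)
    have hb := Real.exp_pos (β * p)
    simp only [hf]; nlinarith
  -- f is positive far to the right
  have hfpos : ∀ p : ℝ, (γ - β) * p ≤ -Real.log 2 → (δ - β) * p ≤ -Real.log 2 → 0 < f p := by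
    intro p hg hdd
    have e1 : Real.exp (γ * p) ≤ Real.exp (β * p) / 2 := exp_le_half _ _ (by nlinarith)
    have e2 : Real.exp (δ * p) ≤ Real.exp (β * p) / 2 := exp_le_half _ _ (by nlinarith)
    have ha := Real.exp_pos (α * p)
    simp only [hf]; nlinarith
  have hga : 0 < γ - α := by linarith
  have hda : 0 < δ - α := by linarith
  have hgb : γ - β < 0 := by linarith
  have hdb : δ - β < 0 := by linarith
  rcases h4.lt_or_gt with hlt | hgt
  · -- α + β < γ + δ : derivative negative, go right
    set Q : ℝ := max ((-Real.log 2) / (γ - β)) ((-Real.log 2) / (δ - β)) with hQdef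
    have hQ1 : (0:ℝ) < (-Real.log 2) / (γ - β) := div_pos_of_neg_of_neg (by linarith) hgb
    have hQpos : 0 < Q := lt_of_lt_of_le hQ1 (le_max_left _ _)
    have hfQ : 0 < f Q := by
      apply hfpos
      · have hq : (-Real.log 2) / (γ - β) ≤ Q := le_max_left _ _
        have := (div_le_iff_of_neg hgb).mp hq
        linarith [this]
      · have hq : (-Real.log 2) / (δ - β) ≤ Q := le_max_right _ _
        have := (div_le_iff_of_neg hdb).mp hq
        linarith [this]
    have hev : ∀ᶠ p in 𝓝[≠] (0:ℝ), slope f 0 p < 0 :=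
      hs.eventually (eventually_lt_nhds (by linarith))
    have hev2 : ∀ᶠ p in 𝓝[>] (0:ℝ), slope f 0 p < 0 :=
      hev.filter_mono (nhdsWithin_mono 0 (fun x hx => ne_of_gt hx))
    have hIoo : ∀ᶠ p in 𝓝[>] (0:ℝ), p ∈ Ioo (0:ℝ) Q :=
      eventually_of_mem (Ioo_mem_nhdsGT_of_mem ⟨le_refl 0, hQpos⟩) (fun x hx => hx)
    obtain ⟨q, hq1, hq2⟩ := (hev2.and hIoo).exists
    have hslope : slope f 0 q = f q / q := by
      simp [slope_def_field, hf0]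
    rw [hslope] at hq1
    have hfq : f q < 0 := by
      rcases div_neg_iff.mp hq1 with ⟨_, h⟩ | ⟨h, _⟩
      · exact absurd hq2.1 (not_lt.mpr h.le)
      · exact h
    have hivt := intermediate_value_Icc (le_of_lt hq2.2) hcont.continuousOn
    obtain ⟨r, hr, hfr⟩ := hivt ⟨hfq.le, hfQ.le⟩
    refine ⟨r, ne_of_gt (lt_of_lt_of_le hq2.1 hr.1), ?_⟩
    simp only [hf] at hfr
    linarith
  · -- γ + δ < α + β : derivative positive, go left
    set P : ℝ := min ((-Real.log 2) / (γ - α)) ((-Real.log 2) / (δ - α)) with hPdef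
    have hP1 : (-Real.log 2) / (γ - α) < 0 := div_neg_of_neg_of_pos (by linarith) hga
    have hPneg : P < 0 := lt_of_le_of_lt (min_le_left _ _) hP1
    have hfP : 0 < f P := by
      apply hfneg
      · have hq : P ≤ (-Real.log 2) / (γ - α) := min_le_left _ _
        have := (le_div_iff₀ hga).mp hq
        linarith [this]
      · have hq : P ≤ (-Real.log 2) / (δ - α) := min_le_right _ _
        have := (le_div_iff₀ hda).mp hq
        linarith [this]
    have hev : ∀ᶠ p in 𝓝[≠] (0:ℝ), 0 < slope f 0 p :=
      hs.eventually (eventually_gt_nhds (by linarith))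
    have hev2 : ∀ᶠ p in 𝓝[<] (0:ℝ), 0 < slope f 0 p :=
      hev.filter_mono (nhdsWithin_mono 0 (fun x hx => ne_of_lt hx))
    have hIoo : ∀ᶠ p in 𝓝[<] (0:ℝ), p ∈ Ioo P (0:ℝ) :=
      eventually_of_mem (Ioo_mem_nhdsLT_of_mem ⟨hPneg, le_refl 0⟩) (fun x hx => hx)
    obtain ⟨q, hq1, hq2⟩ := (hev2.and hIoo).exists
    have hslope : slope f 0 q = f q / q := by
      simp [slope_def_field, hf0]
    rw [hslope] at hq1
    have hfq : f q < 0 := by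
      rcases div_pos_iff.mp hq1 with ⟨_, h⟩ | ⟨h, _⟩
      · exact absurd hq2.2 (not_lt.mpr h.le)
      · exact h
    have hivt := intermediate_value_Icc' (le_of_lt hq2.1) hcont.continuousOn
    obtain ⟨r, hr, hfr⟩ := hivt ⟨hfq.le, hfP.le⟩
    refine ⟨r, ne_of_lt (lt_of_le_of_lt hr.2 hq2.2), ?_⟩
    simp only [hf] at hfr
    linarith

private lemma exists_rpow_eq (m n N M : ℝ) (hm : 0 < m) (hn : 0 < n) (hN : 0 < N)
    (hM : 0 < M) (h1 : m < n) (h2 : n ≤ N) (h3 : N < M) (h4 : m * M ≠ n * N) :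
    ∃ p : ℝ, p ≠ 0 ∧ m ^ p + M ^ p = n ^ p + N ^ p := by
  obtain ⟨p, hp0, hp⟩ := core_exp (Real.log m) (Real.log M) (Real.log n) (Real.log N)
    (Real.log_lt_log hm h1) (Real.log_le_log hn h2) (Real.log_lt_log hN h3)
    (by
      intro hlog
      apply h4
      have e1 : m * M = Real.exp (Real.log m + Real.log M) := by
        rw [Real.exp_add, Real.exp_log hm, Real.exp_log hM]
      have e2 : n * N = Real.exp (Real.log n + Real.log N) := by
        rw [Real.exp_add, Real.exp_log hn, Real.exp_log hN]
      rw [e1, e2, hlog])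
  refine ⟨p, hp0, ?_⟩
  rw [Real.rpow_def_of_pos hm, Real.rpow_def_of_pos hM, Real.rpow_def_of_pos hn,
    Real.rpow_def_of_pos hN]
  exact hp

theorem exists_analogy_pow_iff_framing (a b c d : ℝ)
    (ha : 0 < a) (hb : 0 < b) (hc : 0 < c) (hd : 0 < d)
    (hab : a ≠ b) (hac : a ≠ c) (had : a ≠ d)
    (hbc : b ≠ c) (hbd : b ≠ d) (hcd : c ≠ d) :
    (∃ p : ℝ, AnalogyPow a b c d p) ↔
      (min a d < min b c ∧ max b c < max a d) ∨
      (min b c < min a d ∧ max a d < max b c) := by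
  have hmpos : 0 < min a d := lt_min ha hd
  have hnpos : 0 < min b c := lt_min hb hc
  have hMpos : 0 < max a d := lt_of_lt_of_le ha (le_max_left _ _)
  have hNpos : 0 < max b c := lt_of_lt_of_le hb (le_max_left _ _)
  have hsum_ad : ∀ p : ℝ, a ^ p + d ^ p = (min a d) ^ p + (max a d) ^ p := by
    intro p
    rcases le_total a d with h | h
    · rw [min_eq_left h, max_eq_right h]
    · rw [min_eq_right h, max_eq_left h, add_comm]
  have hsum_bc : ∀ p : ℝ, b ^ p + c ^ p = (min b c) ^ p + (max b c) ^ p := by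
    intro p
    rcases le_total b c with h | h
    · rw [min_eq_left h, max_eq_right h]
    · rw [min_eq_right h, max_eq_left h, add_comm]
  have hprod_ad : a * d = min a d * max a d := (min_mul_max a d).symm
  have hprod_bc : b * c = min b c * max b c := (min_mul_max b c).symm
  have hmn : min a d ≠ min b c := by
    rcases min_choice a d with h1 | h1 <;> rcases min_choice b c with h2 | h2 <;>
      rw [h1, h2]
    · exact hab
    · exact hac
    · exact hbd.symm
    · exact hcd.symm
  have hMN : max a d ≠ max b c := by
    rcases max_choice a d with h1 | h1 <;> rcases max_choice b c with h2 | h2 <;>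
      rw [h1, h2]
    · exact hab
    · exact hac
    · exact hbd.symm
    · exact hcd.symm
  constructor
  · rintro ⟨p, hp⟩
    rcases hmn.lt_or_gt with h1 | h1 <;> rcases hMN.lt_or_gt with h2 | h2
    · -- bad: min a d < min b c, max a d < max b c
      exfalso
      rcases hp with ⟨hp0, heq⟩ | ⟨hp0, heq⟩
      · rw [hsum_ad, hsum_bc] at heq
        rcases hp0.lt_or_gt with hneg | hpos
        · have l1 := Real.rpow_lt_rpow_of_neg hmpos h1 hneg
          have l2 := Real.rpow_lt_rpow_of_neg hMpos h2 hneg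
          linarith
        · have l1 := Real.rpow_lt_rpow hmpos.le h1 hpos
          have l2 := Real.rpow_lt_rpow hMpos.le h2 hpos
          linarith
      · rw [hprod_ad, hprod_bc] at heq
        have := mul_lt_mul'' h1 h2 hmpos.le hMpos.le
        linarith
    · exact Or.inl ⟨h1, h2⟩
    · exact Or.inr ⟨h1, h2⟩
    · -- bad: min b c < min a d, max b c < max a d
      exfalso
      rcases hp with ⟨hp0, heq⟩ | ⟨hp0, heq⟩
      · rw [hsum_ad, hsum_bc] at heq
        rcases hp0.lt_or_gt with hneg | hpos
        · have l1 := Real.rpow_lt_rpow_of_neg hnpos h1 hneg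
          have l2 := Real.rpow_lt_rpow_of_neg hNpos h2 hneg
          linarith
        · have l1 := Real.rpow_lt_rpow hnpos.le h1 hpos
          have l2 := Real.rpow_lt_rpow hNpos.le h2 hpos
          linarith
      · rw [hprod_ad, hprod_bc] at heq
        have := mul_lt_mul'' h1 h2 hnpos.le hNpos.le
        linarith
  · rintro (⟨h1, h2⟩ | ⟨h1, h2⟩)
    · by_cases hprod : a * d = b * c
      · exact ⟨0, Or.inr ⟨rfl, hprod⟩⟩
      · obtain ⟨p, hp0, hp⟩ := exists_rpow_eq (min a d) (min b c) (max b c) (max a d)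
          hmpos hnpos hNpos hMpos h1 (min_le_max) h2
          (by rw [← hprod_ad, ← hprod_bc]; exact hprod)
        exact ⟨p, Or.inl ⟨hp0, by rw [hsum_ad, hsum_bc]; exact hp⟩⟩
    · by_cases hprod : a * d = b * c
      · exact ⟨0, Or.inr ⟨rfl, hprod⟩⟩
      · obtain ⟨p, hp0, hp⟩ := exists_rpow_eq (min b c) (min a d) (max a d) (max b c)
          hnpos hmpos hMpos hNpos h1 (min_le_max) h2
          (by rw [← hprod_ad, ← hprod_bc]; exact fun h => hprod h.symm)
        exact ⟨p, Or.inl ⟨hp0, by rw [hsum_ad, hsum_bc]; exact hp.symm⟩⟩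
end
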